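/- Row 3 of π° has no false positives on solutions: let a Witness triangle puzzle instance on the m×n grid assign k(s) = 3 triangles to a square s. If L is a solution of the instance and W is a prefix of L whose last vertex is not a corner of s, then cnt(W,s) ≠ 2. -/

import Mathlib

open SimpleGraph

/-- The grid graph on `(m+1) × (n+1)` vertices: two vertices are adjacent iff
the sum of the absolute differences of their coordinates (in `ℤ`) equals `1`. -/
def gridGraph (m n : ℕ) : SimpleGraph (Fin (m+1) × Fin (n+1)) where
  Adj u v := |(u.1 : ℤ) - (v.1 : ℤ)| + |(u.2 : ℤ) - (v.2 : ℤ)| = 1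
  symm := by
    constructor
    intro u v h
    rw [abs_sub_comm ((u.1 : ℤ)), abs_sub_comm ((u.2 : ℤ))] at h
    exact h
  loopless := by constructor; intro u h; simp at h

/-- The four corners of the square `s(i,j)`. -/
def squareCorners {m n : ℕ} (i : Fin m) (j : Fin n) :
    Finset (Fin (m+1) × Fin (n+1)) :=
  {(i.castSucc, j.castSucc), (i.succ, j.castSucc),
   (i.castSucc, j.succ), (i.succ, j.succ)}

/-- The four boundary edges of the square `s(i,j)`. -/
def squareEdges {m n : ℕ} (i : Fin m) (j : Fin n) :
    Finset (Sym2 (Fin (m+1) × Fin (n+1))) :=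
  { s((i.castSucc, j.castSucc), (i.succ, j.castSucc)),
    s((i.castSucc, j.succ), (i.succ, j.succ)),
    s((i.castSucc, j.castSucc), (i.castSucc, j.succ)),
    s((i.succ, j.castSucc), (i.succ, j.succ)) }

/-- The number of edges of the walk `W` lying on the boundary of square `s(i,j)`. -/
def cnt {m n : ℕ} {u v : Fin (m+1) × Fin (n+1)}
    (W : (gridGraph m n).Walk u v) (i : Fin m) (j : Fin n) : ℕ :=
  (W.edges.filter (fun e => e ∈ squareEdges i j)).length

/-! Because `L = W.append X` is a path, `W` and `X` meet only in `v`. The constraint puts three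
of the four boundary edges of the square on `L`; if two lie in `W`, the third lies in `X`. Three
edges of a 4-cycle form a path, so the edge in `X` shares a corner of the square with an edge
in `W`, and that corner is a common vertex of `W` and `X` other than `v`. -/

lemma exists_shared_corner_of_three_squareEdges {m n : ℕ} {i : Fin m} {j : Fin n}
    {e₁ e₂ e₃ : Sym2 (Fin (m+1) × Fin (n+1))}
    (h₁ : e₁ ∈ squareEdges i j) (h₂ : e₂ ∈ squareEdges i j) (h₃ : e₃ ∈ squareEdges i j)
    (h₁₂ : e₁ ≠ e₂) (h₁₃ : e₁ ≠ e₃) (h₂₃ : e₂ ≠ e₃) :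
    ∃ c ∈ squareCorners i j, c ∈ e₃ ∧ (c ∈ e₁ ∨ c ∈ e₂) := by
  have hi : i.castSucc ≠ i.succ := Fin.castSucc_lt_succ.ne
  have hj : j.castSucc ≠ j.succ := Fin.castSucc_lt_succ.ne
  simp only [squareEdges, Finset.mem_insert, Finset.mem_singleton] at h₁ h₂ h₃
  rcases h₁ with rfl | rfl | rfl | rfl <;> rcases h₂ with rfl | rfl | rfl | rfl <;>
    rcases h₃ with rfl | rfl | rfl | rfl <;>
    first
    | contradiction
    | (refine ⟨_, ?_, Sym2.mem_mk_left _ _, ?_⟩ <;> simp [squareCorners, hi, hj] <;> done)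
    | (refine ⟨_, ?_, Sym2.mem_mk_right _ _, ?_⟩ <;> simp [squareCorners, hi, hj])

section cnt

variable {m n : ℕ} {u v w : Fin (m+1) × Fin (n+1)} {i : Fin m} {j : Fin n}

lemma cnt_append (W : (gridGraph m n).Walk u v) (X : (gridGraph m n).Walk v w) :
    cnt (W.append X) i j = cnt W i j + cnt X i j := by
  simp [cnt, Walk.edges_append, List.filter_append]

lemma exists_mem_edges_of_cnt_pos {W : (gridGraph m n).Walk u v} (h : 0 < cnt W i j) :
    ∃ e ∈ W.edges, e ∈ squareEdges i j := by
  obtain ⟨e, he⟩ := List.exists_mem_of_length_pos h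
  exact ⟨e, by simpa using List.mem_filter.mp he⟩

lemma exists_ne_mem_edges_of_cnt_eq_two {W : (gridGraph m n).Walk u v} (hW : W.IsTrail)
    (h : cnt W i j = 2) :
    ∃ e₁ ∈ W.edges, ∃ e₂ ∈ W.edges,
      e₁ ≠ e₂ ∧ e₁ ∈ squareEdges i j ∧ e₂ ∈ squareEdges i j := by
  obtain ⟨e₁, e₂, h₁₂⟩ := List.length_eq_two.mp h
  have hnodup : [e₁, e₂].Nodup := h₁₂ ▸ hW.edges_nodup.filter _
  have hmem : ∀ e ∈ [e₁, e₂], e ∈ W.edges ∧ e ∈ squareEdges i j := fun e he => by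
    simpa [← h₁₂] using he
  obtain ⟨⟨he₁W, he₁⟩, he₂W, he₂⟩ := And.intro (hmem e₁ (by simp)) (hmem e₂ (by simp))
  exact ⟨e₁, he₁W, e₂, he₂W, by simpa using hnodup, he₁, he₂⟩

end cnt

theorem row3_no_false_positives_general {m n : ℕ}
    {vStart vGoal v : Fin (m+1) × Fin (n+1)}
    (k : Fin m → Fin n → Option ℕ)
    (L : (gridGraph m n).Walk vStart vGoal) (hL : L.IsPath)
    (hsol : ∀ i j t, k i j = some t → cnt L i j = t)
    (i : Fin m) (j : Fin n) (h3 : k i j = some 3)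
    (W : (gridGraph m n).Walk vStart v)
    (hpre : ∃ X : (gridGraph m n).Walk v vGoal, L = W.append X)
    (hv : v ∉ squareCorners i j) :
    cnt W i j ≠ 2 := by
  obtain ⟨X, rfl⟩ := hpre
  intro hW
  have hX : cnt X i j = 1 := by
    have := hsol i j 3 h3
    rw [cnt_append] at this
    omega
  obtain ⟨-, -, hdisj⟩ := (Walk.isTrail_append W X).mp hL.isTrail
  obtain ⟨e₁, he₁W, e₂, he₂W, h₁₂, he₁, he₂⟩ :=
    exists_ne_mem_edges_of_cnt_eq_two hL.isTrail.of_append_left hW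
  obtain ⟨e₃, he₃X, he₃⟩ := exists_mem_edges_of_cnt_pos (hX ▸ Nat.one_pos)
  obtain ⟨c, hc, hce₃, hce₁₂⟩ := exists_shared_corner_of_three_squareEdges he₁ he₂ he₃ h₁₂
    (fun h => hdisj he₁W (h ▸ he₃X)) (fun h => hdisj he₂W (h ▸ he₃X))
  have hcW : c ∈ W.support := hce₁₂.elim (Walk.mem_support_of_mem_edges he₁W)
    (Walk.mem_support_of_mem_edges he₂W)
  exact hL.ne_of_mem_support_of_append (fun hcv => hv (hcv ▸ hc)) hcW
    (Walk.mem_support_of_mem_edges he₃X hce₃) rfl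

/-- Row 3 of the learned predicate has no false positives on solutions: if a
square carries a three-triangle constraint, `L` solves the puzzle, and `W` is a
prefix of `L` ending at a vertex which is not a corner of that square, then `W`
does not contain exactly two boundary edges of the square. -/
theorem row3_no_false_positives {m n : ℕ}
    {vStart vGoal v : Fin (m+1) × Fin (n+1)}
    (k : Fin m → Fin n → Option ℕ)
    (hk : ∀ i j t, k i j = some t → t = 1 ∨ t = 2 ∨ t = 3)
    (L : (gridGraph m n).Walk vStart vGoal) (hL : L.IsPath)
    (hsol : ∀ i j t, k i j = some t → cnt L i j = t)
    (i : Fin m) (j : Fin n) (h3 : k i j = some 3)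
    (W : (gridGraph m n).Walk vStart v)
    (hpre : ∃ X : (gridGraph m n).Walk v vGoal, L = W.append X)
    (hv : v ∉ squareCorners i j) :
    cnt W i j ≠ 2 :=
  row3_no_false_positives_general k L hL hsol i j h3 W hpre hv
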